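/- arXiv:2301.10437 — 2 statements merged into one kernel-verified Lean document; each statement's English description precedes it below -/
import Mathlib

section
/- Let E be an exact category with enough projectives P and let T be a support τ-tilting subcategory of E. Then T is a tilting subcategory of E if and only if every P ∈ P admits a conflation P ↣ T⁰ ↠ T¹ with T⁰, T¹ ∈ T whose inflation P ↣ T⁰ is a left T-approximation. -/
open CategoryTheory CategoryTheory.Limits ZeroObject

namespace TauTilting

universe w v u

/-- A class of "conflations" (kernel–cokernel pairs) on an additive category,
the datum underlying an exact structure in the sense of Quillen. -/
structure ConflationStruct (C : Type u) [Category.{v} C] [Preadditive C] where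
  /-- `IsConflation f g` means that `X ↣ Y ↠ Z` given by `f, g` is a conflation. -/
  IsConflation : ∀ ⦃X Y Z : C⦄, (X ⟶ Y) → (Y ⟶ Z) → Prop

namespace ConflationStruct

variable {C : Type u} [Category.{v} C] [Preadditive C] (S : ConflationStruct C)

/-- A morphism is an inflation if it occurs as the first map of a conflation. -/
def IsInflation {X Y : C} (f : X ⟶ Y) : Prop :=
  ∃ (Z : C) (g : Y ⟶ Z), S.IsConflation f g

/-- A morphism is a deflation if it occurs as the second map of a conflation. -/
def IsDeflation {Y Z : C} (g : Y ⟶ Z) : Prop :=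
  ∃ (X : C) (f : X ⟶ Y), S.IsConflation f g

/-- Quillen's axioms for an exact structure: conflations are kernel-cokernel pairs,
the class of conflations is closed under isomorphisms, identities are inflations and
deflations, inflations and deflations are closed under composition, pushouts of
inflations along arbitrary morphisms exist and are inflations, and dually. -/
structure IsExactStructure : Prop where
  ker_coker : ∀ {X Y Z : C} {f : X ⟶ Y} {g : Y ⟶ Z}, S.IsConflation f g →
    ∃ w : f ≫ g = 0, Nonempty (IsLimit (KernelFork.ofι f w)) ∧
      Nonempty (IsColimit (CokernelCofork.ofπ g w))
  iso_closed : ∀ {X X' Y Y' Z Z' : C} (eX : X' ≅ X) (eY : Y' ≅ Y) (eZ : Z' ≅ Z)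
    {f : X ⟶ Y} {g : Y ⟶ Z}, S.IsConflation f g →
    S.IsConflation (eX.hom ≫ f ≫ eY.inv) (eY.hom ≫ g ≫ eZ.inv)
  id_inflation : ∀ X : C, S.IsInflation (𝟙 X)
  id_deflation : ∀ X : C, S.IsDeflation (𝟙 X)
  inflation_comp : ∀ {X Y Z : C} {f : X ⟶ Y} {g : Y ⟶ Z},
    S.IsInflation f → S.IsInflation g → S.IsInflation (f ≫ g)
  deflation_comp : ∀ {X Y Z : C} {f : X ⟶ Y} {g : Y ⟶ Z},
    S.IsDeflation f → S.IsDeflation g → S.IsDeflation (f ≫ g)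
  pushout_inflation : ∀ {X Y Z : C} (f : X ⟶ Y) (h : X ⟶ Z), S.IsInflation f →
    ∃ (W : C) (h' : Y ⟶ W) (f' : Z ⟶ W), IsPushout f h h' f' ∧ S.IsInflation f'
  pullback_deflation : ∀ {X Y Z : C} (g : X ⟶ Z) (h : Y ⟶ Z), S.IsDeflation g →
    ∃ (W : C) (h' : W ⟶ X) (g' : W ⟶ Y), IsPullback h' g' g h ∧ S.IsDeflation g'

/-- An object `P` is projective relative to the exact structure: `Hom(P,-)` sends
conflations to short exact sequences, equivalently morphisms out of `P` lift along
deflations. -/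
def IsProjObj (P : C) : Prop :=
  ∀ ⦃Y Z : C⦄ (g : Y ⟶ Z), S.IsDeflation g → ∀ u : P ⟶ Z, ∃ v : P ⟶ Y, v ≫ g = u

/-- The class of projective objects. -/
def projClass : Set C := {P | S.IsProjObj P}

/-- The exact category has enough projectives. -/
def HasEnoughProjectives : Prop :=
  ∀ X : C, ∃ (P : C) (p : P ⟶ X), S.IsProjObj P ∧ S.IsDeflation p

/-- `Fac T` : objects admitting a deflation from an object of `T`. -/
def Fac (T : Set C) : Set C :=
  {X | ∃ (T' : C) (g : T' ⟶ X), T' ∈ T ∧ S.IsDeflation g}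

/-- `Sub T` : objects admitting an inflation into an object of `T`. -/
def Sub (T : Set C) : Set C :=
  {X | ∃ (T' : C) (f : X ⟶ T'), T' ∈ T ∧ S.IsInflation f}

/-- `Ext¹(X, Y) = 0`, expressed by the splitting of all conflations `Y ↣ E ↠ X`. -/
def ext1Zero (X Y : C) : Prop :=
  ∀ (E : C) (f : Y ⟶ E) (g : E ⟶ X), S.IsConflation f g → ∃ s : X ⟶ E, s ≫ g = 𝟙 X

/-- A morphism is admissible if it factors as a deflation followed by an inflation. -/
def IsAdmissible {X Y : C} (f : X ⟶ Y) : Prop :=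
  ∃ (K : C) (d : X ⟶ K) (i : K ⟶ Y), S.IsDeflation d ∧ S.IsInflation i ∧ d ≫ i = f

end ConflationStruct

section Approx

variable {C : Type u} [Category.{v} C]

/-- `f : P ⟶ X` is a left `T`-approximation. -/
def LeftApprox (T : Set C) {P X : C} (f : P ⟶ X) : Prop :=
  X ∈ T ∧ ∀ (T' : C), T' ∈ T → ∀ u : P ⟶ T', ∃ v : X ⟶ T', f ≫ v = u

/-- `f : X ⟶ M` is a right `T`-approximation. -/
def RightApprox (T : Set C) {X M : C} (f : X ⟶ M) : Prop :=
  X ∈ T ∧ ∀ (T' : C), T' ∈ T → ∀ u : T' ⟶ M, ∃ v : T' ⟶ X, v ≫ f = u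

/-- A class of objects closed under direct summands. -/
def SummandClosed (T : Set C) : Prop :=
  ∀ {X Z : C}, Z ∈ T → ∀ (i : X ⟶ Z) (r : Z ⟶ X), i ≫ r = 𝟙 X → X ∈ T

end Approx

section Additive

variable {C : Type u} [Category.{v} C] [Preadditive C] [HasZeroObject C] [HasBinaryBiproducts C]

/-- An additively closed subcategory: closed under isomorphisms, finite direct sums
and direct summands. -/
structure AdditivelyClosed (T : Set C) : Prop where
  mem_of_iso : ∀ {X Y : C}, (X ≅ Y) → X ∈ T → Y ∈ T
  zero_mem : (0 : C) ∈ T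
  biprod_mem : ∀ {X Y : C}, X ∈ T → Y ∈ T → (X ⊞ Y) ∈ T
  summand_mem : SummandClosed T

/-- An object is indecomposable if it is nonzero and any biproduct decomposition is
trivial. -/
def IsIndecomposable (X : C) : Prop :=
  ¬ IsZero X ∧ ∀ (A B : C), (X ≅ A ⊞ B) → IsZero A ∨ IsZero B

/-- The cardinality of the set of isomorphism classes of indecomposable objects in `T`. -/
noncomputable def numIndec (T : Set C) : Cardinal :=
  Cardinal.mk
    (Quot fun (X Y : {X : C // X ∈ T ∧ IsIndecomposable X}) => Nonempty ((X : C) ≅ (Y : C)))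

end Additive

section AddOf

variable {C : Type u} [Category.{v} C] [Preadditive C] [HasFiniteBiproducts C]

/-- The additive closure of a class of objects : direct summands of finite direct
sums of its objects. -/
def addOf (X : Set C) : Set C :=
  {Y | ∃ (n : ℕ) (f : Fin n → C), (∀ j, f j ∈ X) ∧
    ∃ (i : Y ⟶ ⨁ f) (r : (⨁ f) ⟶ Y), i ≫ r = 𝟙 Y}

/-- A Krull-Schmidt category: every object is a finite direct sum of objects with
local endomorphism ring. -/
def IsKrullSchmidt (C : Type u) [Category.{v} C] [Preadditive C] [HasFiniteBiproducts C] : Prop :=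
  ∀ X : C, ∃ (n : ℕ) (f : Fin n → C), (∀ j, IsLocalRing (End (f j))) ∧ Nonempty (X ≅ ⨁ f)

end AddOf

namespace ConflationStruct

variable {C : Type u} [Category.{v} C] [Preadditive C] (S : ConflationStruct C)

section TauTilt

/-- The existence of an exact sequence `P → T⁰ ↠ T¹` with `T⁰, T¹ ∈ T` whose first
map is a left `T`-approximation; the exact sequence is encoded by the factorization
of the first map as a deflation onto its image followed by an inflation which is a
kernel of the deflation `T⁰ ↠ T¹`. -/
def ApproxSeq (T : Set C) (P : C) : Prop :=
  ∃ (K T0 T1 : C) (d : P ⟶ K) (i : K ⟶ T0) (g : T0 ⟶ T1),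
    T1 ∈ T ∧ S.IsDeflation d ∧ S.IsConflation i g ∧ LeftApprox T (d ≫ i)

variable [HasZeroObject C] [HasBinaryBiproducts C]

/-- A τ-rigid subcategory: additively closed with `Ext¹(T, Fac T) = 0`. -/
def IsTauRigid (T : Set C) : Prop :=
  AdditivelyClosed T ∧ ∀ T' ∈ T, ∀ X ∈ S.Fac T, S.ext1Zero T' X

/-- A support τ-tilting subcategory. -/
def IsSupportTauTilting (T : Set C) : Prop :=
  S.IsTauRigid T ∧ ∀ P ∈ S.projClass, S.ApproxSeq T P

/-- Condition (A): every projective admits an admissible left `T`-approximation. -/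
def CondA (T : Set C) : Prop :=
  ∀ P ∈ S.projClass, ∃ (T' : C) (f : P ⟶ T'), LeftApprox T f ∧ S.IsAdmissible f

end TauTilt

section Relative

/-- `g` is a deflation of the full exact subcategory supported on `D` (i.e. it is part
of a conflation all of whose terms belong to `D`; the source and target are recorded
separately where needed). -/
def DeflationIn (D : Set C) {Y Z : C} (g : Y ⟶ Z) : Prop :=
  ∃ (X : C) (f : X ⟶ Y), X ∈ D ∧ S.IsConflation f g

/-- `P` is a projective object of the full exact subcategory supported on `D`. -/
def IsProjRel (D : Set C) (P : C) : Prop :=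
  P ∈ D ∧ ∀ ⦃Y Z : C⦄ (g : Y ⟶ Z), Y ∈ D → Z ∈ D → S.DeflationIn D g →
    ∀ u : P ⟶ Z, ∃ v : P ⟶ Y, v ≫ g = u

/-- `Ext¹(X,Y) = 0` computed in the full exact subcategory supported on `D`. -/
def ext1ZeroRel (D : Set C) (X Y : C) : Prop :=
  ∀ (E : C) (f : Y ⟶ E) (g : E ⟶ X), E ∈ D → S.IsConflation f g →
    ∃ s : X ⟶ E, s ≫ g = 𝟙 X

/-- `extSuccZeroRel S D n X Y` says `Ext^{n+1}(X, Y) = 0` in the full exact subcategory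
supported on `D`, via dimension shifting along syzygies. -/
def extSuccZeroRel (D : Set C) : ℕ → C → C → Prop
  | 0 => fun X Y => S.ext1ZeroRel D X Y
  | (n+1) => fun X Y => ∀ (K P : C) (i : K ⟶ P) (p : P ⟶ X),
      K ∈ D → S.IsProjRel D P → S.IsConflation i p → extSuccZeroRel D n K Y

/-- `Ext^{n+1}(X,Y) = 0` in the ambient exact category. -/
def extSuccZero (n : ℕ) (X Y : C) : Prop := S.extSuccZeroRel Set.univ n X Y

end Relative

section Tilting

variable [HasZeroObject C] [HasBinaryBiproducts C]

/-- A (1-)tilting subcategory of the ambient exact category (with enough projectives):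
additively closed, self-orthogonal for all `Ext^i`, `i ≥ 1`, of projective dimension at
most one, and every projective admits a conflation `P ↣ T⁰ ↠ T¹` with `T⁰, T¹ ∈ T`. -/
def IsTilting (T : Set C) : Prop :=
  AdditivelyClosed T ∧
  (∀ T1 ∈ T, ∀ T2 ∈ T, ∀ n : ℕ, S.extSuccZero n T1 T2) ∧
  (∀ T' ∈ T, ∀ Y : C, S.extSuccZero 1 T' Y) ∧
  (∀ P ∈ S.projClass, ∃ (T0 T1 : C) (f : P ⟶ T0) (g : T0 ⟶ T1),
    T0 ∈ T ∧ T1 ∈ T ∧ S.IsConflation f g)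

/-- A tilting subcategory of the full exact subcategory supported on `D` (whose
projectives are the relative projectives). -/
def IsTiltingRel (D T : Set C) : Prop :=
  AdditivelyClosed T ∧ T ⊆ D ∧
  (∀ T1 ∈ T, ∀ T2 ∈ T, ∀ n : ℕ, S.extSuccZeroRel D n T1 T2) ∧
  (∀ T' ∈ T, ∀ Y ∈ D, S.extSuccZeroRel D 1 T' Y) ∧
  (∀ P : C, S.IsProjRel D P → ∃ (T0 T1 : C) (f : P ⟶ T0) (g : T0 ⟶ T1),
    T0 ∈ T ∧ T1 ∈ T ∧ S.IsConflation f g)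

end Tilting

section Pairs

/-- `⊥₁ D`. -/
def perp1 (D : Set C) : Set C := {X | ∀ Y ∈ D, S.ext1Zero X Y}

/-- `T^⊥₀`. -/
def perp0 (T : Set C) : Set C := {Y | ∀ T' ∈ T, ∀ f : T' ⟶ Y, f = 0}

/-- A torsion class: closed under factor objects and extensions. -/
def IsTorsionClass (D : Set C) : Prop :=
  (∀ {X Y : C} (g : X ⟶ Y), X ∈ D → S.IsDeflation g → Y ∈ D) ∧
  (∀ {X Y Z : C} {f : X ⟶ Y} {g : Y ⟶ Z}, S.IsConflation f g → X ∈ D → Z ∈ D → Y ∈ D)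

/-- A torsion pair `(D, F)`. -/
def IsTorsionPair (D F : Set C) : Prop :=
  (∀ X ∈ D, ∀ Y ∈ F, ∀ f : X ⟶ Y, f = 0) ∧
  (∀ X : C, ∃ (D0 F0 : C) (i : D0 ⟶ X) (p : X ⟶ F0), D0 ∈ D ∧ F0 ∈ F ∧ S.IsConflation i p)

/-- A τ-cotorsion pair `(Cc, D)`. -/
def IsTauCotorsionPair (Cc D : Set C) : Prop :=
  Cc = S.perp1 D ∧
  ∀ P ∈ S.projClass, ∃ (K D0 C0 : C) (d : P ⟶ K) (i : K ⟶ D0) (g : D0 ⟶ C0),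
    D0 ∈ Cc ∧ D0 ∈ D ∧ C0 ∈ Cc ∧ S.IsDeflation d ∧ S.IsConflation i g ∧
    LeftApprox D (d ≫ i)

/-- A (complete) cotorsion pair `(Cc, D)`. -/
def IsCotorsionPair (Cc D : Set C) : Prop :=
  SummandClosed Cc ∧ SummandClosed D ∧
  (∀ X ∈ Cc, ∀ Y ∈ D, S.ext1Zero X Y) ∧
  (∀ X : C, ∃ (D0 C0 : C) (f : D0 ⟶ C0) (g : C0 ⟶ X),
    D0 ∈ D ∧ C0 ∈ Cc ∧ S.IsConflation f g) ∧
  (∀ X : C, ∃ (D1 C1 : C) (f : X ⟶ D1) (g : D1 ⟶ C1),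
    D1 ∈ D ∧ C1 ∈ Cc ∧ S.IsConflation f g)

/-- Admissibly contravariantly finite subcategory. -/
def IsACF (T : Set C) : Prop :=
  ∀ X : C, ∃ (T' : C) (f : T' ⟶ X), RightApprox T f ∧ S.IsAdmissible f

end Pairs

end ConflationStruct

/-- A weakly idempotent complete additive category: every section has a cokernel. -/
def WeaklyIdempotentComplete (C : Type u) [Category.{v} C] [Preadditive C] : Prop :=
  ∀ {X Y : C} (s : X ⟶ Y), (∃ r : Y ⟶ X, s ≫ r = 𝟙 X) → HasCokernel s


namespace ConflationStruct

variable {C : Type u} [Category.{v} C] [Preadditive C] (S : ConflationStruct C)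

section ET

/-- Membership in the ideal `I` of the category of projectives: morphisms `f`
between projectives with `Hom(f, T') = 0` for all `T' ∈ T`. -/
def memIdeal (T : Set C) {Q Q' : C} (f : Q ⟶ Q') : Prop :=
  S.IsProjObj Q ∧ S.IsProjObj Q' ∧ ∀ T' ∈ T, ∀ g : Q' ⟶ T', f ≫ g = 0

/-- `A_T`: the objects killed by the ideal `I`. -/
def AT (T : Set C) : Set C :=
  {X | ∀ ⦃Q Q' : C⦄ (f : Q ⟶ Q'), S.memIdeal T f → ∀ h : Q' ⟶ X, f ≫ h = 0}

/-- The conflation structure induced on a full subcategory: conflations of the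
ambient category all of whose terms lie in the subcategory. -/
def structOn (D : Set C) : ConflationStruct (ObjectProperty.FullSubcategory (fun X : C => X ∈ D)) :=
  ⟨fun _ _ _ f g => S.IsConflation f.hom g.hom⟩

variable [HasFiniteBiproducts C]

/-- `P_T`: additive closure of the images of admissible left `T`-approximations of
projectives. -/
def PTset (T : Set C) : Set C :=
  addOf {K | ∃ (Q T0 : C) (d : Q ⟶ K) (i : K ⟶ T0),
    S.IsProjObj Q ∧ S.IsDeflation d ∧ S.IsInflation i ∧ LeftApprox T (d ≫ i)}

end ET

section NTilting

/-- `T^⊥ = {Y | Ext^i(T', Y) = 0  for all i ≥ 1, T' ∈ T}`. -/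
def rperp (T : Set C) : Set C :=
  {Y | ∀ T' ∈ T, ∀ n : ℕ, S.extSuccZero n T' Y}

/-- `Cores S D n X` : `X` admits an exact sequence
`X ↣ Y₀ → ⋯ → Y_{n-1} ↠ Y_n` with all `Yᵢ ∈ D`. -/
def Cores (D : Set C) : ℕ → C → Prop
  | 0 => fun X => X ∈ D
  | (n+1) => fun X => ∃ (Y K : C) (i : X ⟶ Y) (p : Y ⟶ K),
      Y ∈ D ∧ S.IsConflation i p ∧ Cores D n K

/-- An `n`-tilting subcategory in the sense of Sauter: `T^⊥` has enough projectives
given by `T`, and every object has a `T^⊥`-coresolution of length `n`. -/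
def IsNTilting (T : Set C) (n : ℕ) : Prop :=
  T ⊆ S.rperp T ∧
  (∀ T' ∈ T, ∀ Y ∈ S.rperp T, S.ext1Zero T' Y) ∧
  (∀ Y ∈ S.rperp T, ∃ (K T' : C) (i : K ⟶ T') (p : T' ⟶ Y),
    T' ∈ T ∧ K ∈ S.rperp T ∧ S.IsConflation i p) ∧
  (∀ X : C, S.Cores (S.rperp T) n X)

/-- `P^{<∞}`: objects of finite projective dimension. -/
def Pfin : Set C := {X | ∃ n : ℕ, ∀ Y : C, S.extSuccZero n X Y}

end NTilting

section TauObj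

variable [HasZeroObject C] [HasBinaryBiproducts C]

/-- Variant of `ApproxSeq` where the left approximation is required to be nonzero. -/
def ApproxSeqNonzero (T : Set C) (P : C) : Prop :=
  ∃ (K T0 T1 : C) (d : P ⟶ K) (i : K ⟶ T0) (g : T0 ⟶ T1),
    T1 ∈ T ∧ S.IsDeflation d ∧ S.IsConflation i g ∧ LeftApprox T (d ≫ i) ∧ d ≫ i ≠ 0

/-- A τ-tilting subcategory: support τ-tilting such that every nonzero projective
admits a nonzero such approximation sequence. -/
def IsTauTiltingSubcat (T : Set C) : Prop :=
  S.IsSupportTauTilting T ∧ ∀ P ∈ S.projClass, ¬ IsZero P → S.ApproxSeqNonzero T P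

end TauObj

end ConflationStruct

section K0

variable {C : Type u} [Category.{v} C] [Preadditive C]

/-- Relations for the Grothendieck group of an exact subcategory: conflation
relations together with isomorphism relations. -/
def K0ExRels (S : ConflationStruct C) (D : Set C) :
    Set (FreeAbelianGroup {X : C // X ∈ D}) :=
  {x | (∃ (A B E : {X : C // X ∈ D}) (f : (A : C) ⟶ (B : C)) (g : (B : C) ⟶ (E : C)),
          S.IsConflation f g ∧
          x = FreeAbelianGroup.of B - FreeAbelianGroup.of A - FreeAbelianGroup.of E) ∨
       (∃ (A B : {X : C // X ∈ D}), Nonempty ((A : C) ≅ (B : C)) ∧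
          x = FreeAbelianGroup.of A - FreeAbelianGroup.of B)}

/-- The Grothendieck group of the full exact subcategory supported on `D`. -/
def K0Ex (S : ConflationStruct C) (D : Set C) :=
  FreeAbelianGroup {X : C // X ∈ D} ⧸ AddSubgroup.closure (K0ExRels S D)

noncomputable instance (S : ConflationStruct C) (D : Set C) : AddCommGroup (K0Ex S D) :=
  QuotientAddGroup.Quotient.addCommGroup _

variable [HasBinaryBiproducts C]

/-- Relations for the split Grothendieck group of an additive subcategory. -/
def K0SplitRels (T : Set C) : Set (FreeAbelianGroup {X : C // X ∈ T}) :=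
  {x | (∃ (A B E : {X : C // X ∈ T}), Nonempty ((E : C) ≅ (A : C) ⊞ (B : C)) ∧
          x = FreeAbelianGroup.of E - FreeAbelianGroup.of A - FreeAbelianGroup.of B) ∨
       (∃ (A B : {X : C // X ∈ T}), Nonempty ((A : C) ≅ (B : C)) ∧
          x = FreeAbelianGroup.of A - FreeAbelianGroup.of B)}

/-- The split Grothendieck group of the additive subcategory supported on `T`. -/
def K0Split (T : Set C) :=
  FreeAbelianGroup {X : C // X ∈ T} ⧸ AddSubgroup.closure (K0SplitRels T)

noncomputable instance (T : Set C) : AddCommGroup (K0Split T) :=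
  QuotientAddGroup.Quotient.addCommGroup _

end K0

end TauTilting

/-!
Only if: the inflation of a conflation `P ↣ T⁰ ↠ T¹` is a left `T`-approximation because
`Ext¹(T¹, T) = 0`, so every morphism `P ⟶ T'` extends along it.

If: everything reduces to `pd T ≤ 1`, i.e. to the projectivity of every syzygy `K` in a
conflation `K ↣ Q ↠ T'` with `Q` projective and `T' ∈ T`. Cover `K` by a projective
`d : P ↠ K` with kernel `N` and embed `P` into some `T⁰ ∈ T`; then `G = T⁰ / N` lies in
`Fac T` and `d` induces `γ : K ⟶ G`. By τ-rigidity `Ext¹(T', G) = 0`, so `γ` extends to `Q`,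
and projectivity of `Q` lifts the extension to `T⁰`. Subtracting this lift from the embedding
`P ↣ T⁰` gives a morphism killed by `T⁰ ↠ G`, hence a retraction of `N ↣ P`: so `d` splits
and `K` is a summand of `P`.
-/

namespace TauTilting.ConflationStruct

variable {C : Type u} [Category.{v} C] [Preadditive C] {S : ConflationStruct C}

lemma isProjObj_of_retract {X P : C} (hP : S.IsProjObj P) {σ : X ⟶ P} {ρ : P ⟶ X}
    (h : σ ≫ ρ = 𝟙 X) : S.IsProjObj X := by
  intro Y Z g hg t
  obtain ⟨v, hv⟩ := hP g hg (ρ ≫ t)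
  exact ⟨σ ≫ v, by rw [Category.assoc, hv, reassoc_of% h]⟩

namespace IsExactStructure

section Conflation

variable {X Y Z : C} {f : X ⟶ Y} {g : Y ⟶ Z}

lemma comp_eq_zero (hS : S.IsExactStructure) (h : S.IsConflation f g) : f ≫ g = 0 :=
  (hS.ker_coker h).1

lemma mono (hS : S.IsExactStructure) (h : S.IsConflation f g) : Mono f := by
  obtain ⟨_, ⟨hk⟩, -⟩ := hS.ker_coker h
  exact mono_of_isLimit_fork hk

lemma epi (hS : S.IsExactStructure) (h : S.IsConflation f g) : Epi g := by
  obtain ⟨_, -, ⟨hc⟩⟩ := hS.ker_coker h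
  exact epi_of_isColimit_cofork hc

lemma exists_desc (hS : S.IsExactStructure) (h : S.IsConflation f g) {V : C} (t : Y ⟶ V)
    (ht : f ≫ t = 0) : ∃ φ : Z ⟶ V, g ≫ φ = t := by
  obtain ⟨_, -, ⟨hc⟩⟩ := hS.ker_coker h
  obtain ⟨φ, hφ⟩ := CokernelCofork.IsColimit.desc' hc t ht
  exact ⟨φ, hφ⟩

lemma exists_lift (hS : S.IsExactStructure) (h : S.IsConflation f g) {V : C} (t : V ⟶ Y)
    (ht : t ≫ g = 0) : ∃ ψ : V ⟶ X, ψ ≫ f = t := by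
  obtain ⟨_, ⟨hk⟩, -⟩ := hS.ker_coker h
  obtain ⟨ψ, hψ⟩ := KernelFork.IsLimit.lift' hk t ht
  exact ⟨ψ, hψ⟩

lemma isConflation_comp_iso (hS : S.IsExactStructure) (h : S.IsConflation f g) {Z' : C}
    (e : Z ≅ Z') : S.IsConflation f (g ≫ e.hom) := by
  simpa using hS.iso_closed (Iso.refl X) (Iso.refl Y) e.symm h

lemma exists_retraction_of_section (hS : S.IsExactStructure) (h : S.IsConflation f g)
    {s : Z ⟶ Y} (hs : s ≫ g = 𝟙 Z) : ∃ r : Y ⟶ X, f ≫ r = 𝟙 X := by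
  have := hS.mono h
  obtain ⟨r, hr⟩ := hS.exists_lift h (𝟙 Y - g ≫ s) (by simp [hs])
  refine ⟨r, (cancel_mono f).1 ?_⟩
  simp [hr, reassoc_of% hS.comp_eq_zero h]

lemma exists_section_of_retraction (hS : S.IsExactStructure) (h : S.IsConflation f g)
    {r : Y ⟶ X} (hr : f ≫ r = 𝟙 X) : ∃ s : Z ⟶ Y, s ≫ g = 𝟙 Z := by
  have := hS.epi h
  obtain ⟨s, hs⟩ := hS.exists_desc h (𝟙 Y - r ≫ f) (by simp [reassoc_of% hr])
  refine ⟨s, (cancel_epi g).1 ?_⟩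
  simp [reassoc_of% hs, hS.comp_eq_zero h]

end Conflation

lemma exists_pushout_isConflation (hS : S.IsExactStructure) {A E Z G : C} {a : A ⟶ E}
    {c : E ⟶ Z} (h : S.IsConflation a c) (γ : A ⟶ G) :
    ∃ (B : C) (h' : E ⟶ B) (f' : G ⟶ B) (g' : B ⟶ Z),
      S.IsConflation f' g' ∧ a ≫ h' = γ ≫ f' := by
  obtain ⟨B, h', f', hpo, Z', g', hf'g'⟩ := hS.pushout_inflation a γ ⟨Z, c, h⟩
  have := hS.epi h
  have := hS.epi hf'g'
  have hac : a ≫ c = γ ≫ 0 := by simp [hS.comp_eq_zero h]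
  obtain ⟨ε, hε⟩ := hS.exists_desc hf'g' (hpo.desc c 0 hac) (by simp)
  obtain ⟨ε', hε'⟩ := hS.exists_desc h (h' ≫ g')
    (by rw [reassoc_of% hpo.w, hS.comp_eq_zero hf'g', comp_zero])
  have hεε' : ε ≫ ε' = 𝟙 Z' := by
    refine (cancel_epi g').1 (hpo.hom_ext ?_ ?_)
    · simp [reassoc_of% hε, hε']
    · simp [reassoc_of% hε, hS.comp_eq_zero hf'g']
  have hε'ε : ε' ≫ ε = 𝟙 Z := (cancel_epi c).1 (by simp [reassoc_of% hε', hε])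
  exact ⟨B, h', f', g' ≫ ε,
    hS.isConflation_comp_iso hf'g' ⟨ε, ε', hεε', hε'ε⟩, hpo.w⟩

lemma exists_extension_of_ext1Zero (hS : S.IsExactStructure) {A E Z G : C} {a : A ⟶ E}
    {c : E ⟶ Z} (h : S.IsConflation a c) (hZG : S.ext1Zero Z G) (γ : A ⟶ G) :
    ∃ δ : E ⟶ G, a ≫ δ = γ := by
  obtain ⟨B, h', f', g', hf'g', hw⟩ := hS.exists_pushout_isConflation h γ
  obtain ⟨s, hs⟩ := hZG B f' g' hf'g'
  obtain ⟨r, hr⟩ := hS.exists_retraction_of_section hf'g' hs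
  exact ⟨h' ≫ r, by rw [reassoc_of% hw, hr, Category.comp_id]⟩

lemma exists_retraction_of_comp_isConflation (hS : S.IsExactStructure) {N P K E G : C}
    {k : N ⟶ P} {d : P ⟶ K} {m : P ⟶ E} {u : E ⟶ G} (hkd : k ≫ d = 0)
    (h : S.IsConflation (k ≫ m) u) (l : K ⟶ E) (hl : d ≫ l ≫ u = m ≫ u) :
    ∃ ρ : P ⟶ N, k ≫ ρ = 𝟙 N := by
  have := hS.mono h
  obtain ⟨ρ, hρ⟩ := hS.exists_lift h (m - d ≫ l) (by simp [hl])
  refine ⟨ρ, (cancel_mono (k ≫ m)).1 ?_⟩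
  simp [hρ, reassoc_of% hkd]

end IsExactStructure

lemma mem_fac_of_mem (hS : S.IsExactStructure) {T : Set C} {X : C} (hX : X ∈ T) :
    X ∈ S.Fac T :=
  ⟨X, 𝟙 X, hX, hS.id_deflation X⟩

lemma extSuccZero_zero_iff {X Y : C} : S.extSuccZero 0 X Y ↔ S.ext1Zero X Y :=
  ⟨fun h E f g hfg => h E f g trivial hfg, fun h E f g _ hfg => h E f g hfg⟩

lemma isProjObj_of_isProjRel_univ {P : C} (h : S.IsProjRel Set.univ P) : S.IsProjObj P :=
  fun _ _ g ⟨X, f, hfg⟩ t => h.2 g trivial trivial ⟨X, f, trivial, hfg⟩ t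

lemma extSuccZero_of_isProjObj (hS : S.IsExactStructure) (n : ℕ) :
    ∀ {X : C}, S.IsProjObj X → ∀ Y : C, S.extSuccZero n X Y := by
  induction n with
  | zero =>
    intro X hX Y
    exact extSuccZero_zero_iff.2 fun E f g hfg => hX g ⟨Y, f, hfg⟩ (𝟙 X)
  | succ n ih =>
    intro X hX Y K P i p _ hP hip
    obtain ⟨s, hs⟩ := hX p ⟨K, i, hip⟩ (𝟙 X)
    obtain ⟨r, hr⟩ := hS.exists_retraction_of_section hip hs
    exact ih (isProjObj_of_retract (isProjObj_of_isProjRel_univ hP) hr) Y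

lemma extSuccZero_succ_of_forall_isProjObj (hS : S.IsExactStructure) {X : C}
    (hX : ∀ ⦃K P : C⦄ (i : K ⟶ P) (p : P ⟶ X), S.IsProjObj P → S.IsConflation i p →
      S.IsProjObj K) (n : ℕ) (Y : C) : S.extSuccZero (n + 1) X Y :=
  fun _ _ i p _ hP hip =>
    extSuccZero_of_isProjObj hS n (hX i p (isProjObj_of_isProjRel_univ hP) hip) Y

lemma isProjObj_of_isConflation_of_ext1Zero (hS : S.IsExactStructure)
    (hP : S.HasEnoughProjectives) {T : Set C}
    (hinf : ∀ P ∈ S.projClass, ∃ T0 ∈ T, ∃ f : P ⟶ T0, S.IsInflation f)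
    {K Q X : C} {i : K ⟶ Q} {p : Q ⟶ X} (hip : S.IsConflation i p) (hQ : S.IsProjObj Q)
    (hX : ∀ G ∈ S.Fac T, S.ext1Zero X G) : S.IsProjObj K := by
  obtain ⟨P, d, hPproj, N, k, hkd⟩ := hP K
  obtain ⟨T0, hT0, m, hm⟩ := hinf P hPproj
  obtain ⟨G, u, hku⟩ := hS.inflation_comp ⟨_, _, hkd⟩ hm
  have hG : G ∈ S.Fac T := ⟨T0, u, hT0, _, _, hku⟩
  obtain ⟨γ, hγ⟩ := hS.exists_desc hkd (m ≫ u) (by simpa using hS.comp_eq_zero hku)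
  obtain ⟨δ, hδ⟩ := hS.exists_extension_of_ext1Zero hip (hX G hG) γ
  obtain ⟨v, hv⟩ := hQ u ⟨_, _, hku⟩ δ
  obtain ⟨ρ, hρ⟩ := hS.exists_retraction_of_comp_isConflation (hS.comp_eq_zero hkd) hku
    (i ≫ v) (by rw [Category.assoc, hv, hδ, hγ])
  obtain ⟨σ, hσ⟩ := hS.exists_section_of_retraction hkd hρ
  exact isProjObj_of_retract hPproj hσ

lemma leftApprox_of_isConflation (hS : S.IsExactStructure) {T : Set C} {P T0 T1 : C}
    {f : P ⟶ T0} {g : T0 ⟶ T1} (hfg : S.IsConflation f g) (hT0 : T0 ∈ T)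
    (hT1 : ∀ T' ∈ T, S.ext1Zero T1 T') : LeftApprox T f :=
  ⟨hT0, fun T' hT' t => hS.exists_extension_of_ext1Zero hfg (hT1 T' hT') t⟩

end TauTilting.ConflationStruct

namespace TauTilting

open ConflationStruct

/-- a support τ-tilting subcategory is tilting iff every projective
admits a conflation `P ↣ T⁰ ↠ T¹` with `T⁰, T¹ ∈ T` whose inflation is a left
`T`-approximation. -/
theorem support_tau_tilting_is_tilting_iff
    {C : Type u} [Category.{v} C] [Preadditive C] [HasZeroObject C] [HasBinaryBiproducts C]
    (S : ConflationStruct C) (hS : S.IsExactStructure) (hP : S.HasEnoughProjectives)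
    (T : Set C) (hT : S.IsSupportTauTilting T) :
    S.IsTilting T ↔
      ∀ P ∈ S.projClass, ∃ (T0 T1 : C) (f : P ⟶ T0) (g : T0 ⟶ T1),
        T0 ∈ T ∧ T1 ∈ T ∧ S.IsConflation f g ∧ LeftApprox T f := by
  obtain ⟨⟨hAdd, hrig⟩, -⟩ := hT
  constructor
  · rintro ⟨-, hext, -, hconf⟩ P hP'
    obtain ⟨T0, T1, f, g, hT0, hT1, hfg⟩ := hconf P hP'
    exact ⟨T0, T1, f, g, hT0, hT1, hfg, leftApprox_of_isConflation hS hfg hT0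
      fun T' hT' => extSuccZero_zero_iff.1 (hext T1 hT1 T' hT' 0)⟩
  · intro hA
    have hinf : ∀ P ∈ S.projClass, ∃ T0 ∈ T, ∃ f : P ⟶ T0, S.IsInflation f := by
      intro P hP'
      obtain ⟨T0, T1, f, g, hT0, -, hfg, -⟩ := hA P hP'
      exact ⟨T0, hT0, f, _, _, hfg⟩
    have hpd : ∀ T' ∈ T, ∀ (n : ℕ) (Y : C), S.extSuccZero (n + 1) T' Y := fun T' hT' =>
      extSuccZero_succ_of_forall_isProjObj hS fun _ _ _ _ hQ hip =>
        isProjObj_of_isConflation_of_ext1Zero hS hP hinf hip hQ (hrig T' hT')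
    refine ⟨hAdd, fun T1 hT1 T2 hT2 n => ?_, fun T' hT' Y => hpd T' hT' 0 Y, fun P hP' => ?_⟩
    · cases n with
      | zero => exact extSuccZero_zero_iff.2 (hrig T1 hT1 T2 (mem_fac_of_mem hS hT2))
      | succ n => exact hpd T1 hT1 n T2
    · obtain ⟨T0, T1, f, g, hT0, hT1, hfg, -⟩ := hA P hP'
      exact ⟨T0, T1, f, g, hT0, hT1, hfg⟩

end TauTilting
end

section
/- Let E be a skeletally small abelian category with enough projectives P and let T be a subcategory of E satisfying condition (A). Then the category A_T = {X ∈ E | Hom_E(f, X) = 0 for all f ∈ I} is an abelian category. -/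
/-!
`A_T` contains zero and is closed under subobjects, limits and quotients (a map from a projective
to a quotient lifts), so kernels, cokernels and finite products are computed in `E` and `A_T` is
abelian.
-/

open CategoryTheory CategoryTheory.Limits

universe v u

namespace TauTilting

section KilledByIdeal

variable {E : Type u} [Category.{v} E] [HasZeroMorphisms E] (T : Set E)

/-- The paper's `A_T`, with the ideal `I` written out inline. -/
def killedByIdeal : ObjectProperty E := fun X =>
  ∀ ⦃Q Q' : E⦄ (f : Q ⟶ Q'), Projective Q → Projective Q' →
    (∀ T' ∈ T, ∀ g : Q' ⟶ T', f ≫ g = 0) → ∀ h : Q' ⟶ X, f ≫ h = 0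

instance : (killedByIdeal T).IsClosedUnderSubobjects where
  prop_of_mono i _ hX _ _ f hQ hQ' hf h :=
    (cancel_mono i).1 (by rw [Category.assoc, hX f hQ hQ' hf (h ≫ i), zero_comp])

instance : (killedByIdeal T).IsClosedUnderQuotients where
  prop_of_epi e _ hX _ _ f hQ hQ' hf h := by
    rw [← Projective.factorThru_comp h e, ← Category.assoc,
      hX f hQ hQ' hf (Projective.factorThru h e), zero_comp]

open ZeroObject in
instance [HasZeroObject E] : (killedByIdeal T).ContainsZero where
  exists_zero := ⟨0, isZero_zero E, fun _ _ _ _ _ _ _ => (isZero_zero E).eq_of_tgt _ _⟩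

instance (J : Type*) [Category J] : (killedByIdeal T).IsClosedUnderLimitsOfShape J where
  limitsOfShape_le := by
    rintro X ⟨p⟩ Q Q' f hQ hQ' hf h
    refine p.isLimit.hom_ext fun j => ?_
    simpa using p.prop_diag_obj j f hQ hQ' hf (h ≫ p.π.app j)

instance : (killedByIdeal T).IsClosedUnderFiniteProducts where

end KilledByIdeal

theorem AT_abelian_general
    {E : Type u} [Category.{v} E] [Abelian E]
    (T : Set E) :
    Nonempty (Abelian (ObjectProperty.FullSubcategory (fun X : E =>
      ∀ ⦃Q Q' : E⦄ (f : Q ⟶ Q'), Projective Q → Projective Q' →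
        (∀ T' ∈ T, ∀ g : Q' ⟶ T', f ≫ g = 0) → ∀ h : Q' ⟶ X, f ≫ h = 0))) :=
  ⟨inferInstanceAs (Abelian (killedByIdeal T).FullSubcategory)⟩

/-- for a skeletally small abelian category `E` with enough projectives
and a subcategory `T` satisfying condition (A), the full subcategory
`A_T = {X | Hom(f, X) = 0 for all f ∈ I}` (where `I` is the ideal of morphisms `f`
between projectives with `Hom(f, T) = 0`) is an abelian category. -/
theorem AT_abelian
    {E : Type u} [Category.{v} E] [Abelian E] [EnoughProjectives E] [EssentiallySmall.{v} E]
    (T : Set E)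
    (hA : ∀ P : E, Projective P → ∃ (T' : E) (f : P ⟶ T'), T' ∈ T ∧
      ∀ T'' ∈ T, ∀ u : P ⟶ T'', ∃ v : T' ⟶ T'', f ≫ v = u) :
    Nonempty (Abelian (ObjectProperty.FullSubcategory (fun X : E =>
      ∀ ⦃Q Q' : E⦄ (f : Q ⟶ Q'), Projective Q → Projective Q' →
        (∀ T' ∈ T, ∀ g : Q' ⟶ T', f ≫ g = 0) → ∀ h : Q' ⟶ X, f ≫ h = 0))) :=
  AT_abelian_general T

end TauTilting
end
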